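/- Let f ∈ ℤ[X] be a polynomial of degree n ≥ 1 with leading coefficient α_n that factors over ℂ as f(x) = α_n·(x − z_1)·…·(x − z_n) with z_1, …, z_n ∈ ℂ, and let p ∈ ℤ[X_1, …, X_n] be a symmetric polynomial in n variables of total degree deg(p). Then α_n^{deg(p)} · p(z_1, …, z_n) is an integer (i.e. lies in the image of ℤ in ℂ). -/
import Mathlib

open MvPolynomial Finset

/-- Elementary symmetric polynomials are homogeneous of degree `k`. -/
lemma esymm_isHomogeneous' (n k : ℕ) :
    (esymm (Fin n) ℤ k).IsHomogeneous k := by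
  rw [esymm]
  apply MvPolynomial.IsHomogeneous.sum
  intro t ht
  have := MvPolynomial.IsHomogeneous.prod t (fun i => (X i : MvPolynomial (Fin n) ℤ))
    (fun _ => 1) (fun i _ => isHomogeneous_X _ _)
  rw [Finset.mem_powersetCard] at ht
  simpa [ht.2] using this

/-- Evaluation of a homogeneous polynomial at a scaled point. -/
lemma aeval_mul_smul {n d : ℕ} {q : MvPolynomial (Fin n) ℤ} (hq : q.IsHomogeneous d)
    (c : ℂ) (z : Fin n → ℂ) :
    MvPolynomial.aeval (fun i => c * z i) q = c ^ d * MvPolynomial.aeval z q := by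
  rw [aeval_def, aeval_def, eval₂_eq, eval₂_eq, Finset.mul_sum]
  apply Finset.sum_congr rfl
  intro t ht
  rw [MvPolynomial.mem_support_iff] at ht
  have hdeg : ∑ i ∈ t.support, t i = d := by
    have := hq ht
    simpa [Finsupp.weight_apply, Finsupp.sum] using this
  rw [← hdeg]
  simp_rw [mul_pow]
  rw [Finset.prod_mul_distrib, Finset.prod_pow_eq_pow_sum]
  ring

/-- Homogeneous components of a symmetric polynomial are symmetric. -/
lemma homogeneousComponent_isSymmetric {n : ℕ} {p : MvPolynomial (Fin n) ℤ}
    (hp : p.IsSymmetric) (k : ℕ) : (homogeneousComponent k p).IsSymmetric := by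
  intro e
  by_cases hk : k ≤ p.totalDegree
  · have step : ∀ i ∈ Finset.range (p.totalDegree + 1),
        homogeneousComponent k (rename (⇑e) (homogeneousComponent i p)) =
          if k = i then rename (⇑e) (homogeneousComponent i p) else 0 := by
      intro i _
      exact homogeneousComponent_of_mem
        ((homogeneousComponent_isHomogeneous i p).rename_isHomogeneous (f := ⇑e))
    have hsum : (∑ i ∈ Finset.range (p.totalDegree + 1),
        rename (⇑e) (homogeneousComponent i p)) = p := by
      rw [← map_sum, sum_homogeneousComponent]
      exact hp e
    conv_rhs => rw [← hsum]
    rw [map_sum, Finset.sum_congr rfl step, Finset.sum_ite_eq (Finset.range (p.totalDegree + 1)) k]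
    rw [if_pos (Finset.mem_range.mpr (Nat.lt_succ_of_le hk))]
  · rw [homogeneousComponent_eq_zero _ _ (lt_of_not_ge hk), map_zero]

/-- A symmetric integer polynomial evaluated at a point where all elementary symmetric
polynomials take integer values, takes an integer value. -/
lemma aeval_isInt_of_esymm_isInt {n : ℕ} (w : Fin n → ℂ)
    (hesymm : ∀ k : ℕ, 1 ≤ k → k ≤ n → ∃ m : ℤ, MvPolynomial.aeval w (esymm (Fin n) ℤ k) = m)
    (q : MvPolynomial (Fin n) ℤ) (hq : q.IsSymmetric) :
    ∃ m : ℤ, MvPolynomial.aeval w q = m := by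
  obtain ⟨Q, hQ⟩ := (esymmAlgHom_fin_bijective ℤ n).2 ⟨q, hq⟩
  have hq' : q = MvPolynomial.aeval (fun i : Fin n => esymm (Fin n) ℤ (i + 1)) Q := by
    have := congrArg Subtype.val hQ
    rw [esymmAlgHom_apply] at this
    exact this.symm
  choose m hm using fun i : Fin n => hesymm (i + 1) (Nat.succ_le_succ (Nat.zero_le _))
    (Nat.succ_le_of_lt i.2)
  refine ⟨MvPolynomial.eval m Q, ?_⟩
  rw [hq', comp_aeval_apply]
  have : (fun i : Fin n => MvPolynomial.aeval w (esymm (Fin n) ℤ (i + 1))) =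
      fun i : Fin n => ((m i : ℤ) : ℂ) := by
    funext i; exact hm i
  rw [this]
  rw [show ((MvPolynomial.eval m Q : ℤ) : ℂ) = (Int.castRingHom ℂ) (MvPolynomial.eval m Q) from
    rfl, MvPolynomial.eval, MvPolynomial.coe_eval₂Hom,
    MvPolynomial.eval₂_comp_left (Int.castRingHom ℂ)]
  simp only [aeval_def, RingHom.comp_id, algebraMap_int_eq]
  rfl

/-- If the integer polynomial `f` of degree `n ≥ 1` with leading coefficient `α_n` factors over
`ℂ` as `α_n · (x - z_1) ⋯ (x - z_n)`, and `p ∈ ℤ[X_1, …, X_n]` is a symmetric polynomial of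
total degree `deg p`, then `α_n ^ (deg p) · p(z_1, …, z_n)` is an integer. -/
theorem leadingCoeff_pow_mul_symm_eval_isInt (n : ℕ) (hn : 1 ≤ n) (f : Polynomial ℤ)
    (hdeg : f.natDegree = n) (z : Fin n → ℂ)
    (hfact : f.map (Int.castRingHom ℂ) =
      Polynomial.C ((f.leadingCoeff : ℂ)) * ∏ i : Fin n, (Polynomial.X - Polynomial.C (z i)))
    (p : MvPolynomial (Fin n) ℤ) (hp : p.IsSymmetric) :
    ∃ m : ℤ, (f.leadingCoeff : ℂ) ^ p.totalDegree * MvPolynomial.aeval z p = m := by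
  set α : ℂ := (f.leadingCoeff : ℂ) with hα
  set w : Fin n → ℂ := fun i => α * z i with hw
  set d := p.totalDegree with hd
  -- Step 1: α * e_k(z) is an integer, from Vieta
  have hvieta : ∀ k : ℕ, k ≤ n →
      α * MvPolynomial.aeval z (esymm (Fin n) ℤ k) = ((-1) ^ k * f.coeff (n - k) : ℤ) := by
    intro k hk
    have hcoeff := congrArg (fun q => Polynomial.coeff q (n - k)) hfact
    simp only [Polynomial.coeff_map, Polynomial.coeff_C_mul] at hcoeff
    have hprod : (∏ i : Fin n, (Polynomial.X - Polynomial.C (z i))) =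
        ((Finset.univ.val.map z).map (fun t => Polynomial.X - Polynomial.C t)).prod := by
      rw [Finset.prod_eq_multiset_prod, Multiset.map_map]
      rfl
    have hcard : Multiset.card (Finset.univ.val.map z) = n := by
      simp
    have hnk : n - k ≤ Multiset.card (Finset.univ.val.map z) := by
      rw [hcard]; omega
    rw [hprod, Multiset.prod_X_sub_C_coeff _ hnk, hcard, Nat.sub_sub_self hk] at hcoeff
    have hesymmval : MvPolynomial.aeval z (esymm (Fin n) ℤ k) =
        (Finset.univ.val.map z).esymm k := by
      simpa using MvPolynomial.aeval_esymm_eq_multiset_esymm (Fin n) ℤ k z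
    rw [hesymmval]
    push_cast
    have h2 : ((f.coeff (n - k) : ℤ) : ℂ) =
        α * ((-1) ^ k * (Multiset.map z Finset.univ.val).esymm k) := hcoeff
    have h1 : ((-1 : ℂ)) ^ k * (-1) ^ k = 1 := by
      rw [← pow_add]; exact Even.neg_one_pow ⟨k, rfl⟩
    calc α * (Multiset.map z Finset.univ.val).esymm k
        = ((-1 : ℂ)) ^ k * (-1) ^ k * (α * (Multiset.map z Finset.univ.val).esymm k) := by
          rw [h1, one_mul]
      _ = (-1) ^ k * (α * ((-1) ^ k * (Multiset.map z Finset.univ.val).esymm k)) := by ring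
      _ = (-1) ^ k * ((f.coeff (n - k) : ℤ) : ℂ) := by rw [← h2]
  -- Step 2: esymm values at w are integers
  have hesymmw : ∀ k : ℕ, 1 ≤ k → k ≤ n →
      ∃ m : ℤ, MvPolynomial.aeval w (esymm (Fin n) ℤ k) = m := by
    intro k hk1 hkn
    refine ⟨f.leadingCoeff ^ (k - 1) * ((-1) ^ k * f.coeff (n - k)), ?_⟩
    rw [aeval_mul_smul (esymm_isHomogeneous' n k) α z]
    have : α ^ k = α ^ (k - 1) * α := by
      conv_lhs => rw [show k = (k - 1) + 1 by omega, pow_succ]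
    rw [this, mul_assoc, hvieta k hkn]
    push_cast
    ring
  -- Step 3: each homogeneous component evaluates to an integer at w
  have key : ∀ k : ℕ, ∃ m : ℤ, MvPolynomial.aeval w (homogeneousComponent k p) = m :=
    fun k => aeval_isInt_of_esymm_isInt w hesymmw _ (homogeneousComponent_isSymmetric hp k)
  choose M hM using key
  refine ⟨∑ k ∈ Finset.range (d + 1), f.leadingCoeff ^ (d - k) * M k, ?_⟩
  have expand : α ^ d * MvPolynomial.aeval z p =
      ∑ k ∈ Finset.range (d + 1), α ^ (d - k) * MvPolynomial.aeval w (homogeneousComponent k p) := by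
    conv_lhs => rw [← sum_homogeneousComponent p, map_sum, Finset.mul_sum]
    apply Finset.sum_congr rfl
    intro k hk
    rw [Finset.mem_range] at hk
    rw [aeval_mul_smul (homogeneousComponent_isHomogeneous k p) α z, ← mul_assoc,
      ← pow_add]
    congr 2
    omega
  rw [expand]
  push_cast
  apply Finset.sum_congr rfl
  intro k _
  rw [hM k]
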